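/- arXiv:1010.3414 — 2 statements merged into one kernel-verified Lean document; each statement's English description precedes it below -/
import Mathlib

section
/- Let n ≥ 2, G = SL_n over a field k of characteristic 0, T the diagonal maximal torus and N its normalizer in G. Then the character group of N̄ (homomorphisms N_{k̄} → G_m) is isomorphic to ℤ/2ℤ; specifically T̄ is contained in the derived group of N̄, so characters of N̄ factor through N̄/T̄ ≅ S_n, and X^*(S_n) ≅ ℤ/2ℤ via the sign character. -/
/-!
STATEMENT 14: Let `n ≥ 2`, `G = SL_n` over a field `k` of characteristic 0,
`T` the diagonal maximal torus and `N` its normalizer in `G`.  Then the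
character group of `N̄` (homomorphisms `N_{k̄} → G_m`) is isomorphic to
`ℤ/2ℤ`; specifically `T̄` is contained in the derived group of `N̄`, so
characters of `N̄` factor through `N̄/T̄ ≅ S_n`, and `X^*(S_n) ≅ ℤ/2ℤ` via the
sign character.

Formalization: we work over an algebraically closed field `K` of
characteristic 0 (the `k̄`-points).  `SL n K` is `Matrix.SpecialLinearGroup`,
`T` the subgroup of diagonal matrices, `N = T.normalizer`.  Since any
character kills the derived group and `T ⊆ [N,N]`, the algebraic characters
of `N` coincide with the abstract group homomorphisms `N →* Kˣ`; the claim is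
that this character group is isomorphic to `ℤ/2ℤ`, together with the
auxiliary assertion `T ≤ [N,N]`.
-/

open Matrix

variable (n : ℕ) (K : Type*) [Field K] [IsAlgClosed K] [CharZero K]

/-- The diagonal maximal torus of `SL_n`. -/
def diagonalTorus : Subgroup (Matrix.SpecialLinearGroup (Fin n) K) where
  carrier := {A | (A : Matrix (Fin n) (Fin n) K).IsDiag}
  one_mem' := by
    show (Matrix.IsDiag _)
    simpa using Matrix.isDiag_one
  mul_mem' := by
    intro A B hA hB
    intro i j hij
    show ((A : Matrix (Fin n) (Fin n) K) * (B : Matrix (Fin n) (Fin n) K)) i j = 0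
    rw [Matrix.mul_apply]
    apply Finset.sum_eq_zero
    intro k _
    by_cases hk : i = k
    · subst hk
      rw [hB (hij : i ≠ j), mul_zero]
    · rw [hA (hk : i ≠ k), zero_mul]
  inv_mem' := by
    intro A hA
    show (Matrix.IsDiag _)
    rw [Matrix.SpecialLinearGroup.coe_inv, ← Matrix.IsDiag.diagonal_diag hA,
      Matrix.adjugate_diagonal]
    exact Matrix.isDiag_diagonal _

/-!
Conjugating a regular diagonal element into `T` shows that `N` consists of the monomial matrices
of `SLₙ`, so reading off the underlying permutation is a surjection `N → Sₙ` with kernel `T`.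
Every element of `T` is a commutator in `N`, so every character of `N` kills `T` and factors
through `Sₙ`. A character of `Sₙ` takes one value on all transpositions, as they are conjugate,
and that value squares to `1`; hence it is trivial or the sign.
-/

open Equiv

namespace Matrix

variable {ι R : Type*}

/-- The support of `M` lies on the graph of `σ`, read column-wise so that `IsMonomialOf` is
multiplicative in `σ`. -/
def IsMonomialOf [Zero R] (M : Matrix ι ι R) (σ : Perm ι) : Prop :=
  ∀ i j, M i j ≠ 0 → i = σ j

theorem isMonomialOf_one_iff [Zero R] {M : Matrix ι ι R} : M.IsMonomialOf 1 ↔ M.IsDiag :=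
  ⟨fun h _ _ hij => not_not.mp fun hne => hij (h _ _ hne),
    fun h _ _ hne => not_not.mp fun hij => hne (h hij)⟩

theorem isMonomialOf_permMatrix_inv [DecidableEq ι] [Zero R] [One R] (σ : Perm ι) :
    ((σ⁻¹).permMatrix R).IsMonomialOf σ := by
  intro i j h
  by_contra hij
  exact h (by simp [Perm.permMatrix, PEquiv.toMatrix_apply, Equiv.symm_apply_eq, hij])

variable [Fintype ι]

theorem IsMonomialOf.mul [Semiring R] {M N : Matrix ι ι R} {σ τ : Perm ι}
    (hM : M.IsMonomialOf σ) (hN : N.IsMonomialOf τ) : (M * N).IsMonomialOf (σ * τ) := by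
  intro i k h
  obtain ⟨j, -, hj⟩ := Finset.exists_ne_zero_of_sum_ne_zero h
  rw [hM i j (left_ne_zero_of_mul hj), hN j k (right_ne_zero_of_mul hj), Perm.mul_apply]

theorem IsMonomialOf.mul_diagonal [DecidableEq ι] [CommSemiring R] {M : Matrix ι ι R}
    {σ : Perm ι} (h : M.IsMonomialOf σ) (d : ι → R) :
    M * diagonal d = diagonal (d ∘ ⇑σ⁻¹) * M := by
  ext i j
  rw [Matrix.mul_diagonal, diagonal_mul]
  by_cases hij : M i j = 0
  · simp [hij]
  · simp [h i j hij, mul_comm]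

theorem IsMonomialOf.perm_eq [DecidableEq ι] [CommRing R] {M : Matrix ι ι R} {σ τ : Perm ι}
    (hdet : M.det ≠ 0) (hσ : M.IsMonomialOf σ) (hτ : M.IsMonomialOf τ) : σ = τ := by
  ext j
  obtain ⟨i, hi⟩ : ∃ i, M i j ≠ 0 := by
    by_contra! h
    exact hdet (det_eq_zero_of_column_eq_zero j h)
  rw [← hσ i j hi, ← hτ i j hi]

/-- A nonzero term of the Leibniz expansion of the determinant provides the permutation. -/
theorem exists_isMonomialOf [DecidableEq ι] [CommRing R] {M : Matrix ι ι R} (hdet : M.det ≠ 0)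
    (hrow : ∀ i j j', M i j ≠ 0 → M i j' ≠ 0 → j = j') : ∃ σ, M.IsMonomialOf σ := by
  rw [det_apply] at hdet
  obtain ⟨σ, -, hσ⟩ := Finset.exists_ne_zero_of_sum_ne_zero hdet
  have hgraph : ∀ j, M (σ j) j ≠ 0 := fun j h0 => by
    have hprod : ∏ i, M (σ i) i = 0 := Finset.prod_eq_zero (Finset.mem_univ j) h0
    exact hσ (by rw [hprod, smul_zero])
  refine ⟨σ, fun i j hij => ?_⟩
  have hi : M i (σ⁻¹ i) ≠ 0 := by simpa using hgraph (σ⁻¹ i)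
  simp [hrow i j (σ⁻¹ i) hij hi]

end Matrix

namespace Matrix.SpecialLinearGroup

variable {ι R : Type*} [Fintype ι] [DecidableEq ι] [CommRing R]

def signedPerm [Inhabited ι] (σ : Perm ι) : SpecialLinearGroup ι R :=
  ⟨diagonal (Pi.mulSingle default (Perm.sign σ : R)) * (σ⁻¹).permMatrix R, by
    rw [det_mul, det_diagonal, Finset.prod_pi_mulSingle', if_pos (Finset.mem_univ _),
      det_permutation, Perm.sign_inv, ← Int.cast_mul, ← Units.val_mul, Int.units_mul_self,
      Units.val_one, Int.cast_one]⟩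

theorem isMonomialOf_signedPerm [Inhabited ι] (σ : Perm ι) :
    ((signedPerm σ : SpecialLinearGroup ι R) : Matrix ι ι R).IsMonomialOf σ := by
  have h := (isMonomialOf_one_iff.mpr (isDiag_diagonal
    (Pi.mulSingle default (Perm.sign σ : R)))).mul (isMonomialOf_permMatrix_inv σ)
  rwa [one_mul] at h

theorem perm_eq_of_isMonomialOf [Nontrivial R] {g : SpecialLinearGroup ι R} {σ τ : Perm ι}
    (hσ : (g : Matrix ι ι R).IsMonomialOf σ) (hτ : (g : Matrix ι ι R).IsMonomialOf τ) :
    σ = τ :=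
  hσ.perm_eq (by rw [det_coe]; exact one_ne_zero) hτ

variable {σ : Perm ι} {g : SpecialLinearGroup ι R}

theorem coe_conj_of_isMonomialOf (hg : (g : Matrix ι ι R).IsMonomialOf σ)
    {t : SpecialLinearGroup ι R} {d : ι → R} (ht : (t : Matrix ι ι R) = diagonal d) :
    ((g * t * g⁻¹ : SpecialLinearGroup ι R) : Matrix ι ι R) =
      diagonal (d ∘ ⇑σ⁻¹) := by
  rw [coe_mul, coe_mul, ht, hg.mul_diagonal, Matrix.mul_assoc, ← coe_mul, mul_inv_cancel,
    coe_one, Matrix.mul_one]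

theorem coe_inv_conj_of_isMonomialOf (hg : (g : Matrix ι ι R).IsMonomialOf σ)
    {s : SpecialLinearGroup ι R} {e : ι → R} (hs : (s : Matrix ι ι R) = diagonal e) :
    ((g⁻¹ * s * g : SpecialLinearGroup ι R) : Matrix ι ι R) = diagonal (e ∘ σ) := by
  have hcomm := hg.mul_diagonal (e ∘ σ)
  rw [show (e ∘ σ) ∘ ⇑σ⁻¹ = e by ext; simp] at hcomm
  rw [coe_mul, coe_mul, hs, Matrix.mul_assoc, ← hcomm, ← Matrix.mul_assoc, ← coe_mul,
    inv_mul_cancel, coe_one, Matrix.one_mul]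

end Matrix.SpecialLinearGroup

namespace Equiv.Perm

variable {α : Type*} [Fintype α] [DecidableEq α]

theorem monoidHom_ext_of_swap {M : Type*} [CommMonoid M] {f g : Perm α →* M} {a b : α}
    (hab : a ≠ b) (h : f (swap a b) = g (swap a b)) : f = g := by
  refine MonoidHom.eq_of_eqOn_dense closure_isSwap ?_
  rintro _ ⟨x, y, hxy, rfl⟩
  have hconj : IsConj (swap x y) (swap a b) := isConj_swap hxy hab
  rw [isConj_iff_eq.mp (f.map_isConj hconj), isConj_iff_eq.mp (g.map_isConj hconj), h]

def signChar (R : Type*) [Ring R] : Perm α →* Rˣ :=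
  (Units.map (Int.castRingHom R : ℤ →* R)).comp sign

theorem signChar_swap (R : Type*) [Ring R] {a b : α} (hab : a ≠ b) :
    signChar R (swap a b) = -1 := by
  ext
  simp [signChar, sign_swap hab]

theorem eq_one_or_eq_signChar [Nontrivial α] {R : Type*} [CommRing R] [NoZeroDivisors R]
    (f : Perm α →* Rˣ) : f = 1 ∨ f = signChar R := by
  obtain ⟨a, b, hab⟩ := exists_pair_ne α
  have hsq : (f (swap a b) : R) * f (swap a b) = 1 := by
    rw [← Units.val_mul, ← map_mul, swap_mul_self, map_one, Units.val_one]
  rcases mul_self_eq_one_iff.mp hsq with h | h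
  · refine .inl (monoidHom_ext_of_swap hab (Units.ext ?_))
    simpa using h
  · refine .inr (monoidHom_ext_of_swap hab (Units.ext ?_))
    simpa [signChar_swap R hab] using h

end Equiv.Perm

theorem exists_apply_finRotate_eq_mul {M : Type*} [CommMonoid M] {m : ℕ} (e : Fin m → M)
    (he : ∏ i, e i = 1) : ∃ d : Fin m → M, ∀ i, d (finRotate m i) = e i * d i := by
  cases m with
  | zero => exact ⟨1, fun i => i.elim0⟩
  | succ m =>
    refine ⟨fun i => Fin.partialProd e i.castSucc, fun i => ?_⟩
    induction i using Fin.lastCases with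
    | last =>
      have htotal : Fin.partialProd e (Fin.last m).succ = 1 := by
        rw [← he, Fin.succ_last, Fin.partialProd, Fin.val_last,
          List.take_of_length_le (by simp), List.prod_ofFn]
      rw [Fin.partialProd_succ, mul_comm] at htotal
      simp only [finRotate_last, Fin.castSucc_zero, Fin.partialProd_zero, htotal]
    | cast k =>
      have hrot : finRotate (m + 1) k.castSucc = k.succ :=
        Fin.ext (by rw [coe_finRotate_of_ne_last (Fin.castSucc_lt_last k).ne]; simp)
      simp only [hrot, ← Fin.succ_castSucc, Fin.partialProd_succ, mul_comm]

theorem exists_ne_zero_prod_mul_eq_one {F ι : Type*} [Field F] [IsAlgClosed F] [Fintype ι]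
    [Nonempty ι] {x : ι → F} (hx : ∏ i, x i ≠ 0) : ∃ c ≠ 0, ∏ i, c * x i = 1 := by
  obtain ⟨c, hc⟩ :=
    IsAlgClosed.exists_pow_nat_eq (∏ i, x i)⁻¹ (Fintype.card_pos (α := ι))
  refine ⟨c, ?_, ?_⟩
  · rintro rfl
    rw [zero_pow Fintype.card_pos.ne'] at hc
    exact hx (inv_eq_zero.mp hc.symm)
  · rw [Finset.prod_mul_distrib, Finset.prod_const, Finset.card_univ, hc, inv_mul_cancel₀ hx]

theorem exists_injective_prod_eq_one (F : Type*) [Field F] [IsAlgClosed F] [CharZero F] (m : ℕ)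
    [NeZero m] : ∃ d : Fin m → F, Function.Injective d ∧ ∏ i, d i = 1 := by
  set x : Fin m → F := fun i => ((i + 1 : ℕ) : F)
  have hx : Function.Injective x := fun a b hab => by
    simpa [x, Fin.ext_iff] using hab
  obtain ⟨c, hc, hprod⟩ := exists_ne_zero_prod_mul_eq_one (x := x)
    (Finset.prod_ne_zero_iff.mpr fun i _ => Nat.cast_ne_zero.mpr (Nat.succ_ne_zero i))
  exact ⟨fun i => c * x i, fun a b hab => hx (mul_left_cancel₀ hc hab), hprod⟩

open Subgroup Matrix.SpecialLinearGroup
open scoped commutatorElement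

abbrev torusNormalizer (m : ℕ) (F : Type*) [Field F] : Subgroup (SpecialLinearGroup (Fin m) F) :=
  normalizer (diagonalTorus m F : Set (SpecialLinearGroup (Fin m) F))

section Normalizer

variable {m : ℕ} {F : Type*} [Field F]

theorem mem_diagonalTorus_iff {t : SpecialLinearGroup (Fin m) F} :
    t ∈ diagonalTorus m F ↔ (t : Matrix (Fin m) (Fin m) F).IsDiag :=
  Iff.rfl

theorem mem_torusNormalizer_of_isMonomialOf {g : SpecialLinearGroup (Fin m) F} {σ : Perm (Fin m)}
    (hg : (g : Matrix (Fin m) (Fin m) F).IsMonomialOf σ) : g ∈ torusNormalizer m F := by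
  refine mem_normalizer_iff.mpr fun t => ⟨fun ht => ?_, fun ht => ?_⟩
  · rw [mem_diagonalTorus_iff,
      coe_conj_of_isMonomialOf hg (mem_diagonalTorus_iff.mp ht).diagonal_diag.symm]
    exact isDiag_diagonal _
  · rw [show t = g⁻¹ * (g * t * g⁻¹) * g by group, mem_diagonalTorus_iff,
      coe_inv_conj_of_isMonomialOf hg (mem_diagonalTorus_iff.mp ht).diagonal_diag.symm]
    exact isDiag_diagonal _

theorem exists_isMonomialOf_of_mem_torusNormalizer [IsAlgClosed F] [CharZero F] [NeZero m]
    {g : SpecialLinearGroup (Fin m) F} (hg : g ∈ torusNormalizer m F) :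
    ∃ σ, (g : Matrix (Fin m) (Fin m) F).IsMonomialOf σ := by
  obtain ⟨d, hd, hprod⟩ := exists_injective_prod_eq_one F m
  let t : SpecialLinearGroup (Fin m) F := ⟨diagonal d, by rw [det_diagonal, hprod]⟩
  have hs : g * t * g⁻¹ ∈ diagonalTorus m F :=
    (mem_normalizer_iff.mp hg t).mp (isDiag_diagonal d)
  set e := ((g * t * g⁻¹ : SpecialLinearGroup (Fin m) F) : Matrix (Fin m) (Fin m) F).diag
  have hcomm : diagonal e * g = g * diagonal d := by
    have h := congrArg (fun x : SpecialLinearGroup (Fin m) F => (x : Matrix (Fin m) (Fin m) F))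
      (inv_mul_cancel_right (g * t) g)
    rwa [Matrix.SpecialLinearGroup.coe_mul (g * t * g⁻¹) g,
      Matrix.SpecialLinearGroup.coe_mul g t, ← (mem_diagonalTorus_iff.mp hs).diagonal_diag] at h
  have hentry : ∀ i j, (g : Matrix (Fin m) (Fin m) F) i j ≠ 0 → d j = e i := fun i j hij => by
    have h := congrFun (congrFun hcomm i) j
    rw [diagonal_mul, Matrix.mul_diagonal] at h
    exact mul_right_cancel₀ hij ((mul_comm _ _).trans h.symm)
  refine exists_isMonomialOf (by rw [det_coe]; exact one_ne_zero) fun i j j' hj hj' => ?_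
  exact hd ((hentry i j hj).trans (hentry i j' hj').symm)

/-- The quotient map `N → N / T ≃ Sₙ`. -/
noncomputable def normalizerPerm [IsAlgClosed F] [CharZero F] [NeZero m] :
    torusNormalizer m F →* Perm (Fin m) where
  toFun g := (exists_isMonomialOf_of_mem_torusNormalizer g.2).choose
  map_one' := perm_eq_of_isMonomialOf
    (exists_isMonomialOf_of_mem_torusNormalizer (1 : torusNormalizer m F).2).choose_spec
    (by simpa using isMonomialOf_one_iff.mpr (isDiag_one (n := Fin m) (α := F)))
  map_mul' g h := perm_eq_of_isMonomialOf
    (exists_isMonomialOf_of_mem_torusNormalizer (g * h).2).choose_spec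
    ((exists_isMonomialOf_of_mem_torusNormalizer g.2).choose_spec.mul
      (exists_isMonomialOf_of_mem_torusNormalizer h.2).choose_spec)

theorem isMonomialOf_normalizerPerm [IsAlgClosed F] [CharZero F] [NeZero m]
    (g : torusNormalizer m F) :
    ((g : SpecialLinearGroup (Fin m) F) : Matrix (Fin m) (Fin m) F).IsMonomialOf
      (normalizerPerm g) := by
  exact (exists_isMonomialOf_of_mem_torusNormalizer g.2).choose_spec

noncomputable def normalizerSignedPerm [NeZero m] (σ : Perm (Fin m)) : torusNormalizer m F :=
  ⟨signedPerm σ, mem_torusNormalizer_of_isMonomialOf (isMonomialOf_signedPerm σ)⟩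

theorem normalizerPerm_signedPerm [IsAlgClosed F] [CharZero F] [NeZero m] (σ : Perm (Fin m)) :
    normalizerPerm (normalizerSignedPerm (F := F) σ) = σ :=
  perm_eq_of_isMonomialOf (isMonomialOf_normalizerPerm _) (isMonomialOf_signedPerm σ)

/-- Every `t ∈ T` is a single commutator `⁅w, s⁆`, with `w` a signed cyclic permutation matrix
and `s = diagonal d ∈ T`: since `⁅w, diagonal d⁆ = diagonal (fun i => d (i + 1) / d i)`, one
needs `d (i + 1) = t i i * d i` around the cycle, which is consistent because `∏ i, t i i = 1`. -/
theorem diagonalTorus_le_map_commutator [IsAlgClosed F] [NeZero m] :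
    diagonalTorus m F ≤ (commutator (torusNormalizer m F)).map (torusNormalizer m F).subtype := by
  intro t ht
  set e := (t : Matrix (Fin m) (Fin m) F).diag
  have hte : (t : Matrix (Fin m) (Fin m) F) = diagonal e :=
    (mem_diagonalTorus_iff.mp ht).diagonal_diag.symm
  have hprod : ∏ i, e i = 1 := by rw [← det_diagonal, ← hte, det_coe]
  have he : ∀ i, e i ≠ 0 := fun i h0 =>
    one_ne_zero (hprod ▸ Finset.prod_eq_zero (Finset.mem_univ i) h0)
  obtain ⟨d, hd⟩ := exists_apply_finRotate_eq_mul (fun i => Units.mk0 (e i) (he i))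
    (Units.ext (by simpa using hprod))
  obtain ⟨c, -, hcd⟩ := exists_ne_zero_prod_mul_eq_one (x := fun i => (d i : F))
    (Finset.prod_ne_zero_iff.mpr fun i _ => (d i).ne_zero)
  let s : SpecialLinearGroup (Fin m) F := ⟨diagonal fun i => c * d i, by rw [det_diagonal, hcd]⟩
  have hcomm : ⁅(signedPerm (finRotate m)⁻¹ : SpecialLinearGroup (Fin m) F), s⁆ = t := by
    rw [commutatorElement_def, mul_inv_eq_iff_eq_mul]
    ext1
    rw [coe_conj_of_isMonomialOf (isMonomialOf_signedPerm _) rfl, Matrix.SpecialLinearGroup.coe_mul,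
      hte, diagonal_mul_diagonal]
    congr 1
    funext i
    simp only [Function.comp_apply, inv_inv, hd i, Units.val_mul, Units.val_mk0]
    ring
  refine mem_map.mpr
    ⟨⁅normalizerSignedPerm (finRotate m)⁻¹, ⟨s, le_normalizer (isDiag_diagonal _)⟩⁆,
      commutator_mem_commutator (mem_top _) (mem_top _), ?_⟩
  rw [map_commutatorElement]
  exact hcomm

theorem ker_normalizerPerm_le_ker [IsAlgClosed F] [CharZero F] [NeZero m]
    (φ : torusNormalizer m F →* Fˣ) :
    (normalizerPerm (m := m) (F := F)).ker ≤ φ.ker := by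
  intro g hg
  have hT : (g : SpecialLinearGroup (Fin m) F) ∈ diagonalTorus m F := by
    have h := isMonomialOf_normalizerPerm g
    rw [MonoidHom.mem_ker.mp hg] at h
    exact isMonomialOf_one_iff.mp h
  obtain ⟨x, hx, hxg⟩ := mem_map.mp (diagonalTorus_le_map_commutator hT)
  rw [← Subtype.ext hxg]
  exact Abelianization.commutator_subset_ker φ hx

theorem eq_one_or_eq_signChar_comp_normalizerPerm [IsAlgClosed F] [CharZero F] [NeZero m]
    [Nontrivial (Fin m)] (φ : torusNormalizer m F →* Fˣ) :
    φ = 1 ∨ φ = (Perm.signChar F).comp normalizerPerm := by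
  set ψ := normalizerPerm.liftOfRightInverse normalizerSignedPerm normalizerPerm_signedPerm
    ⟨φ, ker_normalizerPerm_le_ker φ⟩
  have hψ : ψ.comp normalizerPerm = φ := normalizerPerm.liftOfRightInverse_comp _ _ _
  rcases Perm.eq_one_or_eq_signChar ψ with h | h
  · left
    rw [← hψ, h, MonoidHom.one_comp]
  · right
    rw [← hψ, h]

theorem card_characters_torusNormalizer [IsAlgClosed F] [CharZero F] (hn : 2 ≤ m) :
    Nat.card (torusNormalizer m F →* Fˣ) = 2 := by
  have : NeZero m := ⟨by omega⟩
  have : Nontrivial (Fin m) := Fin.nontrivial_iff_two_le.mpr hn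
  obtain ⟨a, b, hab⟩ := exists_pair_ne (Fin m)
  refine Nat.card_eq_two_iff.mpr ⟨1, (Perm.signChar F).comp normalizerPerm, fun h => ?_,
    Set.eq_univ_of_forall fun φ => eq_one_or_eq_signChar_comp_normalizerPerm φ⟩
  have h := DFunLike.congr_fun h (normalizerSignedPerm (swap a b))
  simp [normalizerPerm_signedPerm, Perm.signChar_swap F hab] at h

end Normalizer

theorem characters_of_normalizer_of_torus_in_SL (hn : 2 ≤ n) :
    (diagonalTorus n K ≤
      Subgroup.map (Subgroup.normalizer (diagonalTorus n K : Set (Matrix.SpecialLinearGroup (Fin n) K))).subtype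
        (commutator ↥(Subgroup.normalizer (diagonalTorus n K : Set (Matrix.SpecialLinearGroup (Fin n) K))))) ∧
    Nonempty ((↥(Subgroup.normalizer (diagonalTorus n K : Set (Matrix.SpecialLinearGroup (Fin n) K))) →* Kˣ) ≃* Multiplicative (ZMod 2)) := by
  have : NeZero n := ⟨by omega⟩
  exact ⟨diagonalTorus_le_map_commutator,
    ⟨mulEquivOfPrimeCardEq (card_characters_torusNormalizer (F := K) hn)
      (by rw [Nat.card_eq_fintype_card (α := Multiplicative (ZMod 2)),
        Fintype.card_multiplicative, ZMod.card])⟩⟩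
end

section
/- Let G be a connected linear algebraic group over a field k of characteristic 0 acting on a smooth geometrically integral k-variety X such that the forgetful map Pic_G(X̄) → Pic(X̄) is surjective. Then there is a short exact sequence of complexes of Galois modules 0 → Z¹_alg(Ḡ, O(X̄)^×)[−1] → UPic_G(X̄) → UPic(X̄) → 0, where the first map sends c to (c⁻¹, 0) in degree 1 and the second is the natural forgetful morphism. -/
/-!
STATEMENT 19: Let `G` be a connected linear algebraic group over a field `k`
of characteristic 0 acting on a smooth geometrically integral `k`-variety `X`
such that the forgetful map `Pic_G(X̄) → Pic(X̄)` is surjective.  Then there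
is a short exact sequence of complexes of Galois modules
`0 → Z¹_alg(Ḡ, O(X̄)^×)[−1] → UPic_G(X̄) → UPic(X̄) → 0`,
where the first map sends `c` to `(c⁻¹, 0)` in degree 1 and the second is the
natural forgetful morphism.

Formalization.  The function-theoretic data is modelled by abelian groups
and homomorphisms (divisor groups written multiplicatively):
* `KX = K(X̄)^×/k̄^×`, `KXG = K(X̄ × Ḡ)^×`, `KXGG = K(X̄ × Ḡ × Ḡ)^×`,
  `DivX = Div(X̄)`, `DivXG = Div(X̄ × Ḡ)`;
* pullbacks `wK pK : KX →* KXG`, `mK pK1 wK1 : KXG →* KXGG`,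
  `wD pD : DivX →* DivXG` and divisor maps `divX : KX →* DivX`,
  `divXG : KXG →* DivXG`;
* `OXG ≤ KXG` is the subgroup `O(X̄ × Ḡ)^×` of invertible *regular*
  functions; the standard fact `div z = 0 ↔ z regular invertible` is the
  hypothesis `hO`;
* the cocycle groups: `Z¹_alg(Ḡ, K(X̄)^×) = {z | mK z = pK1 z * wK1 z}`,
  `Z¹_alg(Ḡ, O(X̄)^×)` its intersection with `OXG`; the degree-1 term
  `UPic_G(X̄)¹` is the subgroup `Zgrp` of pairs `(z, D)` with `z` a cocycle
  and `div z = w^*D − p^*D`; the degree-0 terms of `UPic_G(X̄)` and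
  `UPic(X̄)` are both `KX`, with differentials `f ↦ (d⁰f, div f)` and
  `f ↦ div f`, where `d⁰ f = w^*f/p^*f` (a cocycle, hypothesis `hd0coc`,
  with `div (d⁰ f) = w^*(div f) / p^*(div f)`, hypothesis `hd0div`);
* the surjectivity of `Pic_G(X̄) → Pic(X̄)` reads: every divisor class is
  the class of the divisor of a cocycle pair (hypothesis `hPicSurj`).
The conclusion is the degreewise exactness of
`0 → Z¹_alg(Ḡ, O(X̄)^×)[−1] → UPic_G(X̄) → UPic(X̄) → 0` together with the
compatibility with the differentials:
(i)  `μ : c ↦ (c⁻¹, 1)` maps `Z¹_alg(Ḡ, O(X̄)^×)` injectively into `Zgrp`;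
(ii) exactness in the middle: the kernel of `ν¹ : (z, D) ↦ D` on `Zgrp` is
     exactly the image of `μ`;
(iii) `ν¹ : Zgrp → DivX` is surjective (this uses the surjectivity of
     `Pic_G(X̄) → Pic(X̄)`);
(iv) in degree 0, `ν⁰` is the identity of `KX` and the maps commute with the
     differentials.
-/

theorem upicG_short_exact_sequence
    {KX KXG KXGG DivX DivXG : Type*}
    [CommGroup KX] [CommGroup KXG] [CommGroup KXGG]
    [CommGroup DivX] [CommGroup DivXG]
    (wK pK : KX →* KXG) (mK pK1 wK1 : KXG →* KXGG)
    (wD pD : DivX →* DivXG)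
    (divX : KX →* DivX) (divXG : KXG →* DivXG)
    -- invertible regular functions on `X̄ × Ḡ`, and the fact that they are
    -- exactly the rational functions with trivial divisor
    (OXG : Subgroup KXG) (hO : ∀ z : KXG, divXG z = 1 ↔ z ∈ OXG)
    -- `d⁰ f = w^*f/p^*f` is a cocycle with divisor `w^*(div f)/p^*(div f)`
    (hd0coc : ∀ f : KX, mK (wK f * (pK f)⁻¹) =
      pK1 (wK f * (pK f)⁻¹) * wK1 (wK f * (pK f)⁻¹))
    (hd0div : ∀ f : KX, divXG (wK f * (pK f)⁻¹) =
      wD (divX f) * (pD (divX f))⁻¹)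
    -- the degree-1 term `UPic_G(X̄)¹ = Z¹` of pairs `(z, D)`
    (Zgrp : Subgroup (KXG × DivX))
    (hZgrp : ∀ p : KXG × DivX, p ∈ Zgrp ↔
      (mK p.1 = pK1 p.1 * wK1 p.1 ∧ divXG p.1 = wD p.2 * (pD p.2)⁻¹))
    -- surjectivity of `Pic_G(X̄) → Pic(X̄)` : every divisor agrees, modulo a
    -- principal divisor, with the divisor of some cocycle pair
    (hPicSurj : ∀ D : DivX, ∃ p : KXG × DivX, p ∈ Zgrp ∧
      ∃ f : KX, D = p.2 * divX f) :
    -- (i) `μ : c ↦ (c⁻¹, 1)` maps `Z¹_alg(Ḡ, O(X̄)^×)` into `Zgrp`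
    --     (injectively, which is clear)
    (∀ c : KXG, c ∈ OXG → mK c = pK1 c * wK1 c →
      ((c⁻¹, 1) : KXG × DivX) ∈ Zgrp) ∧
    -- (ii) exactness at `UPic_G(X̄)¹` : `ker ν¹ = im μ`
    (∀ p : KXG × DivX, p ∈ Zgrp →
      (p.2 = 1 ↔ ∃ c : KXG, c ∈ OXG ∧ mK c = pK1 c * wK1 c ∧
        p = (c⁻¹, 1))) ∧
    -- (iii) surjectivity of `ν¹ : UPic_G(X̄)¹ → Div(X̄)`
    (∀ D : DivX, ∃ z : KXG, ((z, D) : KXG × DivX) ∈ Zgrp) ∧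
    -- (iv) compatibility with the differentials : `ν¹ ∘ d_{UPic_G} = d_{UPic}`
    --      and `d_{UPic_G} f ∈ Zgrp` for every `f ∈ KX`
    (∀ f : KX, ((wK f * (pK f)⁻¹, divX f) : KXG × DivX) ∈ Zgrp ∧
      ((wK f * (pK f)⁻¹, divX f) : KXG × DivX).2 = divX f) := by
  have hd : ∀ f : KX, ((wK f * (pK f)⁻¹, divX f) : KXG × DivX) ∈ Zgrp := by
    intro f
    rw [hZgrp]
    exact ⟨hd0coc f, hd0div f⟩
  refine ⟨?_, ?_, ?_, fun f => ⟨hd f, rfl⟩⟩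
  · intro c hc hcoc
    rw [hZgrp]
    constructor
    · simp [hcoc, mul_comm]
    · simp [(hO c⁻¹).mpr (inv_mem hc)]
  · intro p hp
    constructor
    · intro h2
      rw [hZgrp] at hp
      refine ⟨p.1⁻¹, ?_, ?_, ?_⟩
      · exact inv_mem ((hO p.1).mp (by simp [hp.2, h2]))
      · have := hp.1
        simp [this, mul_comm]
      · ext <;> simp [h2]
    · rintro ⟨c, _, _, rfl⟩
      rfl
  · intro D
    obtain ⟨p, hpZ, f, hDf⟩ := hPicSurj D
    refine ⟨p.1 * (wK f * (pK f)⁻¹), ?_⟩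
    have := mul_mem hpZ (hd f)
    simpa [Prod.mul_def, hDf] using this
end
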